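/- Let X be a finite set of simply typed variables, 𝕋 a finite set of simple types, and τ ∈ 𝕋. Let W_τ be the set of words in X·({@} ∪ {λx : x ∈ X})* having type τ under the 𝕋-restricted word-typing rules. Then there exists a deterministic finite automaton over the alphabet X^λ = X ∪ {@} ∪ {λx : x ∈ X}, with a finite set of states, that recognizes exactly W_τ and is counter-free: for every state q, every word w, and every integer k ≥ 1, if reading w^k (w repeated k times) from q leads back to q, then reading w once from q already leads back to q. -/

import Mathlib

/-- Simple types: τ ::= o | τ → τ. -/
inductive Ty : Type
  | o : Ty
  | arrow : Ty → Ty → Ty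
deriving DecidableEq


/-- The alphabet `X^λ = X ∪ {@} ∪ {λx : x ∈ X}`. -/
inductive Letter (V : Type) : Type
  | var : V → Letter V
  | lam : V → Letter V
  | app : Letter V

/-- The `𝕋`-restricted word-typing rules on nonempty words over `X^λ`:
the one-letter word `x` has the type of `x` provided it is in `𝕋`;
if `u : τ` then `u·λx : σ → τ` where `σ` is the type of `x` and `σ, τ ∈ 𝕋`;
if `u : σ → τ` with `σ, τ ∈ 𝕋` then `u·@ : τ`. -/
inductive WTyT {V : Type} (tyOf : V → Ty) (T : Set Ty) : List (Letter V) → Ty → Prop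
  | var (x : V) : tyOf x ∈ T → WTyT tyOf T [Letter.var x] (tyOf x)
  | lam {u : List (Letter V)} {τ : Ty} (x : V) :
      tyOf x ∈ T → τ ∈ T → WTyT tyOf T u τ →
      WTyT tyOf T (u ++ [Letter.lam x]) (Ty.arrow (tyOf x) τ)
  | app {u : List (Letter V)} {σ τ : Ty} :
      σ ∈ T → τ ∈ T → WTyT tyOf T u (Ty.arrow σ τ) →
      WTyT tyOf T (u ++ [Letter.app]) τ

/-! The automaton tracks the type of the prefix read so far, besides a start and a dead state.
Every live type lies in `𝕋 ∪ (𝕋 → 𝕋)`, so finitely many states suffice.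

For counter-freeness, identify a type `σ₁ → ⋯ → σₙ → o` with its spine `[σ₁, …, σₙ]`. On live
states a word `w` acts by dropping a number `m` of leading arguments and prepending a list `p`,
both depending on `w` only. If `wᵏ` fixes a state, comparing arities gives `m = |p|`; but then
`w` acts idempotently ("drop `|p|`, prepend `p`" twice is the same as once), and an idempotent
action that returns to a state after `k` steps fixes it after one. -/

namespace DFA

variable {α σ : Type*}

def restrict (M : DFA α σ) (S : Set σ) (hstart : M.start ∈ S)
    (hstep : ∀ q ∈ S, ∀ a, M.step q a ∈ S) : DFA α S where
  step q a := ⟨M.step q a, hstep q q.2 a⟩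
  start := ⟨M.start, hstart⟩
  accept := Subtype.val ⁻¹' M.accept

section Restrict

variable (M : DFA α σ) (S : Set σ) (hstart : M.start ∈ S)
  (hstep : ∀ q ∈ S, ∀ a, M.step q a ∈ S)

@[simp]
theorem val_evalFrom_restrict (q : S) (w : List α) :
    ((M.restrict S hstart hstep).evalFrom q w : σ) = M.evalFrom q w := by
  induction w generalizing q with
  | nil => rfl
  | cons a w ih => exact ih _

@[simp]
theorem accepts_restrict : (M.restrict S hstart hstep).accepts = M.accepts := by
  ext w
  exact Iff.of_eq (congrArg (· ∈ M.accept) (val_evalFrom_restrict M S hstart hstep _ w))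

end Restrict

def IsCounterFree (M : DFA α σ) : Prop :=
  ∀ (q : σ) (w : List α) (k : ℕ), 1 ≤ k →
    M.evalFrom q (List.replicate k w).flatten = q → M.evalFrom q w = q

theorem IsCounterFree.restrict {M : DFA α σ} (hM : M.IsCounterFree) (S : Set σ)
    (hstart : M.start ∈ S) (hstep : ∀ q ∈ S, ∀ a, M.step q a ∈ S) :
    (M.restrict S hstart hstep).IsCounterFree := fun q w k hk h =>
  Subtype.ext <| by
    simpa using hM q w k hk (by simpa using congrArg Subtype.val h)

theorem evalFrom_replicate_of_evalFrom_eq {M : DFA α σ} {q : σ} {w : List α}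
    (h : M.evalFrom q w = q) (n : ℕ) : M.evalFrom q (List.replicate n w).flatten = q :=
  M.evalFrom_of_pow h <| Language.mem_kstar.2
    ⟨_, rfl, fun _ hy => List.eq_of_mem_replicate hy⟩

theorem evalFrom_eq_self_of_replicate_of_idempotent {M : DFA α σ} {q : σ} {w : List α}
    {k : ℕ} (hk : 1 ≤ k) (h : M.evalFrom q (List.replicate k w).flatten = q)
    (hidem : M.evalFrom (M.evalFrom q w) w = M.evalFrom q w) : M.evalFrom q w = q := by
  obtain ⟨j, rfl⟩ : ∃ j, k = j + 1 := ⟨k - 1, by omega⟩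
  rwa [List.replicate_succ, List.flatten_cons, evalFrom_of_append,
    evalFrom_replicate_of_evalFrom_eq hidem] at h

end DFA

def Ty.spine : Ty → List Ty
  | .o => []
  | .arrow σ τ => σ :: τ.spine

theorem Ty.spine_injective : Function.Injective Ty.spine := by
  intro t t' h
  induction t generalizing t' with
  | o => cases t' <;> simp_all [Ty.spine]
  | arrow σ τ _ ih =>
    cases t' with
    | o => simp [Ty.spine] at h
    | arrow σ' τ' =>
      simp only [Ty.spine, List.cons.injEq] at h
      rw [h.1, ih h.2]

inductive TyState
  | dead
  | start
  | live (t : Ty)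

section TypingDFA

variable {V : Type} (tyOf : V → Ty) (T : Set Ty) (τ : Ty)

open Classical in
noncomputable def typingStep : TyState → Letter V → TyState
  | .start, .var x => if tyOf x ∈ T then .live (tyOf x) else .dead
  | .live t, .lam x => if tyOf x ∈ T ∧ t ∈ T then .live (.arrow (tyOf x) t) else .dead
  | .live (.arrow σ t), .app => if σ ∈ T ∧ t ∈ T then .live t else .dead
  | _, _ => .dead

noncomputable def typingDFA : DFA (Letter V) TyState where
  step := typingStep tyOf T
  start := .start
  accept := {.live τ}

variable {tyOf T τ}

theorem typingDFA_step : (typingDFA tyOf T τ).step = typingStep tyOf T := rfl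

@[simp]
theorem typingDFA_evalFrom_dead (w : List (Letter V)) :
    (typingDFA tyOf T τ).evalFrom .dead w = .dead := by
  induction w with
  | nil => rfl
  | cons a w ih => cases a <;> exact ih

theorem typingStep_ne_start (q : TyState) (a : Letter V) : typingStep tyOf T q a ≠ .start := by
  unfold typingStep
  split <;> (try split) <;> simp

theorem typingDFA_evalFrom_ne_start {q : TyState} {w : List (Letter V)} (hw : w ≠ []) :
    (typingDFA tyOf T τ).evalFrom q w ≠ .start := by
  rw [← List.dropLast_append_getLast hw, DFA.evalFrom_append_singleton]
  exact typingStep_ne_start _ _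

theorem exists_typingDFA_evalFrom_live_of_append {s t : Ty} {u v : List (Letter V)}
    (h : (typingDFA tyOf T τ).evalFrom (.live s) (u ++ v) = .live t) :
    ∃ r, (typingDFA tyOf T τ).evalFrom (.live s) u = .live r ∧
      (typingDFA tyOf T τ).evalFrom (.live r) v = .live t := by
  rw [DFA.evalFrom_of_append] at h
  rcases hu : (typingDFA tyOf T τ).evalFrom (.live s) u with _ | _ | r <;> rw [hu] at h
  · simp at h
  · obtain rfl : u = [] := by
      by_contra hne
      exact typingDFA_evalFrom_ne_start hne hu
    cases hu
  · exact ⟨r, rfl, h⟩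

theorem typingDFA_eval_of_wTyT {w : List (Letter V)} {t : Ty} (h : WTyT tyOf T w t) :
    (typingDFA tyOf T τ).eval w = .live t := by
  induction h with
  | var x hx => simp [typingDFA, typingStep, hx]
  | lam x hx ht _ ih =>
    rw [DFA.eval_append_singleton, ih]
    simp [typingDFA, typingStep, hx, ht]
  | app hσ ht _ ih =>
    rw [DFA.eval_append_singleton, ih]
    simp [typingDFA, typingStep, hσ, ht]

theorem wTyT_of_typingDFA_eval {w : List (Letter V)} {t : Ty}
    (h : (typingDFA tyOf T τ).eval w = .live t) : WTyT tyOf T w t := by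
  induction w using List.reverseRecOn generalizing t with
  | nil => cases h
  | append_singleton w a ih =>
    rw [DFA.eval_append_singleton] at h
    rcases hw : (typingDFA tyOf T τ).eval w with _ | _ | s <;> rw [hw] at h
    · cases a <;> cases h
    · obtain rfl : w = [] := by
        by_contra hne
        exact typingDFA_evalFrom_ne_start hne hw
      cases a with
      | var x =>
        simp only [typingDFA, typingStep] at h
        split_ifs at h with hx
        cases h
        exact .var _ hx
      | lam | app => cases h
    · cases a with
      | var x => cases h
      | lam x =>
        simp only [typingDFA, typingStep] at h
        split_ifs at h with hx
        cases h
        exact .lam x hx.1 hx.2 (ih hw)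
      | app =>
        cases s with
        | o => cases h
        | arrow σ s =>
          simp only [typingDFA, typingStep] at h
          split_ifs at h with hσ
          cases h
          exact .app hσ.1 hσ.2 (ih hw)

variable (tyOf) in
def spineEffect : List (Letter V) → ℕ × List Ty
  | [] => (0, [])
  | .var _ :: _ => (0, []) -- a variable kills every live state
  | .lam x :: w =>
    match spineEffect w with
    | (0, p) => (0, p ++ [tyOf x])
    | (m + 1, p) => (m, p)
  | .app :: w => ((spineEffect w).1 + 1, (spineEffect w).2)

theorem spine_of_typingDFA_evalFrom_live (w : List (Letter V)) {t t' : Ty}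
    (h : (typingDFA tyOf T τ).evalFrom (.live t) w = .live t') :
    (spineEffect tyOf w).1 ≤ t.spine.length ∧
      t'.spine = (spineEffect tyOf w).2 ++ t.spine.drop (spineEffect tyOf w).1 := by
  induction w generalizing t with
  | nil =>
    cases h
    simp [spineEffect]
  | cons a w ih =>
    rw [DFA.evalFrom_cons] at h
    cases a with
    | var x => simp [typingDFA_step, typingStep] at h
    | lam x =>
      by_cases hx : tyOf x ∈ T ∧ t ∈ T
      · simp only [typingDFA_step, typingStep, if_pos hx] at h
        obtain ⟨hle, hsp⟩ := ih h
        simp only [Ty.spine] at hle hsp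
        rcases hm : spineEffect tyOf w with ⟨_ | m, p⟩ <;> rw [hm] at hle hsp <;>
          simp only [spineEffect, hm] <;> simp_all
      · simp [typingDFA_step, typingStep, hx] at h
    | app =>
      cases t with
      | o => simp [typingDFA_step, typingStep] at h
      | arrow σ s =>
        by_cases hσ : σ ∈ T ∧ s ∈ T
        · simp only [typingDFA_step, typingStep, if_pos hσ] at h
          obtain ⟨hle, hsp⟩ := ih h
          simp_all [spineEffect, Ty.spine]
        · simp [typingDFA_step, typingStep, hσ] at h

theorem length_spine_add_of_typingDFA_evalFrom_live (w : List (Letter V)) {t t' : Ty}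
    (h : (typingDFA tyOf T τ).evalFrom (.live t) w = .live t') :
    t'.spine.length + (spineEffect tyOf w).1 = (spineEffect tyOf w).2.length + t.spine.length := by
  obtain ⟨hle, hsp⟩ := spine_of_typingDFA_evalFrom_live w h
  rw [hsp, List.length_append, List.length_drop]
  omega

theorem length_spine_add_of_typingDFA_evalFrom_replicate (w : List (Letter V)) (k : ℕ)
    {t t' : Ty} (h : (typingDFA tyOf T τ).evalFrom (.live t) (List.replicate k w).flatten = .live t') :
    t'.spine.length + k * (spineEffect tyOf w).1 =
      k * (spineEffect tyOf w).2.length + t.spine.length := by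
  induction k generalizing t with
  | zero =>
    cases h
    simp
  | succ k ih =>
    rw [List.replicate_succ, List.flatten_cons] at h
    obtain ⟨r, hr, hrest⟩ := exists_typingDFA_evalFrom_live_of_append h
    have hw := length_spine_add_of_typingDFA_evalFrom_live w hr
    have hk := ih hrest
    rw [Nat.succ_mul, Nat.succ_mul]
    linarith

theorem spineEffect_fst_eq_length_of_typingDFA_evalFrom_replicate {w : List (Letter V)} {k : ℕ}
    (hk : 1 ≤ k) {t : Ty}
    (h : (typingDFA tyOf T τ).evalFrom (.live t) (List.replicate k w).flatten = .live t) :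
    (spineEffect tyOf w).1 = (spineEffect tyOf w).2.length := by
  have := length_spine_add_of_typingDFA_evalFrom_replicate w k h
  exact Nat.eq_of_mul_eq_mul_left hk (by linarith)

theorem typingDFA_evalFrom_live_idempotent {w : List (Letter V)}
    (hw : (spineEffect tyOf w).1 = (spineEffect tyOf w).2.length) {t t₁ t₂ : Ty}
    (h₁ : (typingDFA tyOf T τ).evalFrom (.live t) w = .live t₁)
    (h₂ : (typingDFA tyOf T τ).evalFrom (.live t₁) w = .live t₂) : t₂ = t₁ := by
  apply Ty.spine_injective
  rw [(spine_of_typingDFA_evalFrom_live w h₂).2, (spine_of_typingDFA_evalFrom_live w h₁).2, hw,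
    List.drop_left]

theorem typingDFA_isCounterFree : (typingDFA tyOf T τ).IsCounterFree := by
  intro q w k hk h
  cases q with
  | dead => exact typingDFA_evalFrom_dead w
  | start =>
    obtain rfl : w = [] := by
      by_contra hw
      exact typingDFA_evalFrom_ne_start (by simpa [hw] using Nat.pos_iff_ne_zero.mp hk) h
    rfl
  | live t =>
    apply DFA.evalFrom_eq_self_of_replicate_of_idempotent hk h
    obtain ⟨j, rfl⟩ : ∃ j, k = j + 1 := ⟨k - 1, by omega⟩
    have h' := h
    rw [List.replicate_succ, List.flatten_cons] at h'
    obtain ⟨t₁, h₁, hrest⟩ := exists_typingDFA_evalFrom_live_of_append h'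
    rw [h₁]
    cases j with
    | zero =>
      cases hrest
      exact h₁
    | succ j =>
      rw [List.replicate_succ, List.flatten_cons] at hrest
      obtain ⟨t₂, h₂, -⟩ := exists_typingDFA_evalFrom_live_of_append hrest
      rw [h₂, typingDFA_evalFrom_live_idempotent
        (spineEffect_fst_eq_length_of_typingDFA_evalFrom_replicate hk h) h₁ h₂]

theorem mem_typingDFA_accepts {w : List (Letter V)} :
    w ∈ (typingDFA tyOf T τ).accepts ↔ WTyT tyOf T w τ :=
  ⟨wTyT_of_typingDFA_eval, typingDFA_eval_of_wTyT⟩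

/-- A `λ`-step may produce `σ → τ ∉ 𝕋`, hence the arrows over `𝕋`. -/
def typingStates (T : Set Ty) : Set TyState :=
  {.dead, .start} ∪ .live '' (T ∪ Set.image2 .arrow T T)

theorem typingStates_finite (hT : T.Finite) : (typingStates T).Finite :=
  ((Set.toFinite _).insert _).union ((hT.union (hT.image2 _ hT)).image _)

theorem typingStep_mem_typingStates (q : TyState) (a : Letter V) :
    typingStep tyOf T q a ∈ typingStates T := by
  unfold typingStep typingStates
  split <;> (try split) <;> simp_all

end TypingDFA

theorem counter_free_DFA_for_word_types_general {V : Type} (tyOf : V → Ty)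
    (T : Set Ty) (hT : T.Finite) (τ : Ty) :
    ∃ (Q : Type) (_ : Fintype Q) (A : DFA (Letter V) Q),
      (∀ w : List (Letter V), w ∈ A.accepts ↔ WTyT tyOf T w τ) ∧
      (∀ (q : Q) (w : List (Letter V)) (k : ℕ), 1 ≤ k →
        A.evalFrom q ((List.replicate k w).flatten) = q →
        A.evalFrom q w = q) := by
  have hstart : (typingDFA tyOf T τ).start ∈ typingStates T := by simp [typingDFA, typingStates]
  have hstep : ∀ q ∈ typingStates T, ∀ a, (typingDFA tyOf T τ).step q a ∈ typingStates T :=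
    fun q _ a => typingStep_mem_typingStates q a
  refine ⟨typingStates T, (typingStates_finite hT).fintype,
    (typingDFA tyOf T τ).restrict _ hstart hstep, fun w => ?_,
    typingDFA_isCounterFree.restrict _ hstart hstep⟩
  rw [DFA.accepts_restrict, mem_typingDFA_accepts]

/-- For a finite set `X` of typed variables, a finite set `𝕋` of simple types
and `τ ∈ 𝕋`, there is a deterministic finite automaton (finitely many states)
over the alphabet `X^λ` recognizing exactly the words of type `τ` under the
`𝕋`-restricted word-typing rules, and this automaton is counter-free:
if reading `w^k` (`k ≥ 1`) from a state `q` leads back to `q`, then reading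
`w` once from `q` already leads back to `q`. -/
theorem counter_free_DFA_for_word_types {V : Type} [Fintype V] (tyOf : V → Ty)
    (T : Set Ty) (hT : T.Finite) (τ : Ty) (hτ : τ ∈ T) :
    ∃ (Q : Type) (_ : Fintype Q) (A : DFA (Letter V) Q),
      (∀ w : List (Letter V), w ∈ A.accepts ↔ WTyT tyOf T w τ) ∧
      (∀ (q : Q) (w : List (Letter V)) (k : ℕ), 1 ≤ k →
        A.evalFrom q ((List.replicate k w).flatten) = q →
        A.evalFrom q w = q) :=
  counter_free_DFA_for_word_types_general tyOf T hT τ
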